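/- arXiv:2203.07796 — 2 statements merged into one kernel-verified Lean document; each statement's English description precedes it below -/
import Mathlib

section
/- If for every winning transaction path T*_j in the efficient allocation graph the path payment satisfies X(T*_j) − C(T*_j) ≥ W^(K)(θ'_{-1_j}) ≥ v^(K+1) (where 1_j is the first agent on the path and v^(K+1) is the (K+1)-th highest bid among the seller's direct neighbor buyers), and intermediary payments are nonpositive while each intermediary appears in n_k ≥ 1 winning paths, then the total seller revenue satisfies R(CNA, θ') = Σ_{k ∈ AG*} x_k(θ') − C(θ') ≥ Σ_j (X(T*_j) − C(T*_j)) ≥ K·v^(K+1) = R(VCG-WI, θ') ≥ 0. -/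
/-- Suppose the efficient allocation graph `G` is the union of the
`K` winning paths `T j` (`j ∈ J`), each agent `k` lies in
`n_k = #{j ∈ J | k ∈ T j}` paths, winning buyers lie in exactly one path,
intermediary payments are nonpositive, and each path satisfies
`X(T*_j) − C(T*_j) ≥ W^(K)(θ'_{-1_j}) ≥ v^(K+1) ≥ 0` (where `v^(K+1)` is the
`(K+1)`-th highest bid among the seller's direct neighbor buyers). Then the seller
revenue satisfies
`R(CNA) = Σ_{k∈G} x_k − C(θ') ≥ Σ_j (X(T*_j) − C(T*_j)) ≥ K·v^(K+1) = R(VCG-WI) ≥ 0`. -/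
theorem stmt10 {α κ : Type*} [DecidableEq α] [DecidableEq κ]
    (K : ℕ) (J : Finset κ) (T : κ → Finset α) (G : Finset α)
    (buyers : Finset α) (x : α → ℝ) (Ccost : κ → ℝ) (WK1 : κ → ℝ) (vK1 : ℝ)
    (hG : G = J.biUnion T)
    (hbuyer : ∀ k ∈ G, k ∈ buyers → (J.filter fun j => k ∈ T j).card = 1)
    (hint : ∀ k ∈ G, k ∉ buyers → x k ≤ 0)
    (hpath : ∀ j ∈ J, (∑ k ∈ T j, x k) - Ccost j ≥ WK1 j ∧ WK1 j ≥ vK1)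
    (hJ : J.card = K) (hv : 0 ≤ vK1) :
    (∑ k ∈ G, x k) - (∑ j ∈ J, Ccost j)
        ≥ ∑ j ∈ J, ((∑ k ∈ T j, x k) - Ccost j) ∧
    (∑ j ∈ J, ((∑ k ∈ T j, x k) - Ccost j)) ≥ (K : ℝ) * vK1 ∧
    (K : ℝ) * vK1 ≥ 0 := by

  have hsub : ∀ j ∈ J, T j ⊆ G := fun j hj => hG ▸ Finset.subset_biUnion_of_mem T hj
  have key : (∑ j ∈ J, ∑ k ∈ T j, x k)
      = ∑ k ∈ G, ((J.filter fun j => k ∈ T j).card : ℝ) * x k := by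
    have h1 : ∀ j ∈ J, (∑ k ∈ T j, x k) = ∑ k ∈ G, if k ∈ T j then x k else 0 := by
      intro j hj
      rw [Finset.sum_ite_mem, Finset.inter_eq_right.mpr (hsub j hj)]
    rw [Finset.sum_congr rfl h1, Finset.sum_comm]
    refine Finset.sum_congr rfl fun k hk => ?_
    rw [Finset.sum_ite, Finset.sum_const_zero, add_zero, Finset.sum_const,
      nsmul_eq_mul]
  have hn : ∀ k ∈ G, 1 ≤ (J.filter fun j => k ∈ T j).card := by
    intro k hk
    rw [hG, Finset.mem_biUnion] at hk
    obtain ⟨j, hj, hkj⟩ := hk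
    exact Finset.card_pos.mpr ⟨j, Finset.mem_filter.mpr ⟨hj, hkj⟩⟩
  have part1 : (∑ k ∈ G, x k) - (∑ j ∈ J, Ccost j)
      ≥ ∑ j ∈ J, ((∑ k ∈ T j, x k) - Ccost j) := by
    rw [Finset.sum_sub_distrib]
    have : (∑ j ∈ J, ∑ k ∈ T j, x k) ≤ ∑ k ∈ G, x k := by
      rw [key]
      refine Finset.sum_le_sum fun k hk => ?_
      by_cases hb : k ∈ buyers
      · rw [hbuyer k hk hb]; simp
      · have hx := hint k hk hb
        have h1 : (1 : ℝ) ≤ ((J.filter fun j => k ∈ T j).card : ℝ) := by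
          exact_mod_cast hn k hk
        nlinarith
    linarith
  have part2 : (∑ j ∈ J, ((∑ k ∈ T j, x k) - Ccost j)) ≥ (K : ℝ) * vK1 := by
    calc (∑ j ∈ J, ((∑ k ∈ T j, x k) - Ccost j)) ≥ ∑ j ∈ J, vK1 := by
          refine Finset.sum_le_sum fun j hj => ?_
          obtain ⟨h1, h2⟩ := hpath j hj
          linarith
      _ = (K : ℝ) * vK1 := by rw [Finset.sum_const, hJ, nsmul_eq_mul]
  exact ⟨part1, part2, mul_nonneg (Nat.cast_nonneg K) hv⟩
end

section
/- In a tree-structured market, for an intermediary k on a seller-to-buyer path with successor k+1, the set of agents valid when k withholds her critical neighborhood is sandwiched between the set of agents valid without k and the set valid without k+1: F(θ'_{-k}) ⊆ F(r_k' \ ṽ_k(θ'), θ'_{-k}) ⊆ F(θ'_{-(k+1)}). -/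
/-- Validity avoiding a set `bad` of removed agents: `a` is valid if it is
reachable by a diffusion path that never visits an agent of `bad`. Taking
`bad = {k}` gives the valid agents when `k` does not participate. -/
inductive ValidIn {α : Type*} (rs I : Finset α) (θ : α → Finset α)
    (bad : Finset α) : α → Prop
  | base {a : α} : a ∈ rs → a ∉ bad → ValidIn rs I θ bad a
  | step {a b : α} : ValidIn rs I θ bad a → a ∈ I → b ∈ θ a → b ∉ bad →
      ValidIn rs I θ bad b

/-- The critical neighborhood of an intermediary with reported neighbor set `r`:
her neighbors in the efficient allocation graph `AGraph` together with her
neighboring intermediaries. -/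
def critN {A : Type*} [DecidableEq A] (r AGraph interm : Finset A) : Finset A :=
  (r ∩ AGraph) ∪ (r ∩ interm)

/-- In a tree-structured market (the successor `succ` of `k` on a
seller-to-buyer path is an intermediary neighbor of `k`, is not a direct neighbor
of the seller, and has `k` as unique parent), the set of agents valid when `k`
withholds her critical neighborhood is sandwiched between the set of agents valid
without `k` and the set of agents valid without `succ`:
`F(θ'_{-k}) ⊆ F(r_k' \ ṽ_k(θ'), θ'_{-k}) ⊆ F(θ'_{-succ})`. -/
theorem stmt14 {α : Type*} [DecidableEq α] (rs I : Finset α)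
    (θ : α → Finset α) (k succ : α) (AGstar : Finset α)
    (hsuccI : succ ∈ I) (hsuccN : succ ∈ θ k) (hsuccRs : succ ∉ rs)
    (hparent : ∀ a ∈ I, succ ∈ θ a → a = k) :
    (∀ x, ValidIn rs I θ {k} x →
      ValidIn rs I (Function.update θ k (θ k \ critN (θ k) AGstar I)) ∅ x) ∧
    (∀ x, ValidIn rs I (Function.update θ k (θ k \ critN (θ k) AGstar I)) ∅ x →
      ValidIn rs I θ {succ} x) := by
  constructor
  · intro x hx
    induction hx with
    | base ha _ => exact ValidIn.base ha (Finset.notMem_empty _)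
    | step hv haI hb hbk ih =>
        rename_i a b
        have hak : a ≠ k := by
          rcases hv with ⟨_, hk⟩ | ⟨_, _, _, hk⟩ <;> simpa using hk
        refine ValidIn.step ih haI ?_ (Finset.notMem_empty _)
        rw [Function.update_of_ne hak]
        exact hb
  · intro x hx
    induction hx with
    | base ha _ =>
        refine ValidIn.base ha ?_
        simp only [Finset.mem_singleton]
        rintro rfl; exact hsuccRs ha
    | step hv haI hb hb0 ih =>
        rename_i a b
        by_cases hak : a = k
        · subst hak
          rw [Function.update_self] at hb
          have hb' := Finset.mem_sdiff.mp hb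
          refine ValidIn.step ih haI hb'.1 ?_
          simp only [Finset.mem_singleton]
          rintro rfl
          exact hb'.2 (Finset.mem_union_right _ (Finset.mem_inter.mpr ⟨hsuccN, hsuccI⟩))
        · rw [Function.update_of_ne hak] at hb
          refine ValidIn.step ih haI hb ?_
          simp only [Finset.mem_singleton]
          rintro rfl
          exact hak (hparent a haI hb)
end
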